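/- Let P be a set of point trajectories satisfying the pseudo-algebraic and general position assumptions, and let (pq, r, I) be a single Delaunay crossing for P in which r crosses the segment pq from L⁻_pq to L⁺_pq. Then for every s ∈ P∖{p,q,r} there is a time t ∈ I at which the four points p,q,r,s are concyclic with r(t) and s(t) lying strictly on opposite sides of the line through p(t) and q(t); moreover, this co-circularity occurs as s crosses the boundary circle of the circumdisc B[p,q,r] of p(t),q(t),r(t), either entering the cap B[p,q,r] ∩ L⁺_pq or leaving the cap B[p,q,r] ∩ L⁻_pq. -/

import Mathlib

/-!
Kinetic Delaunay triangulations of points moving in the plane: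
common definitions (trajectories, Delaunay edges, co-circularity and
collinearity events, general position assumptions, Delaunay crossings).
-/

noncomputable section

attribute [local instance] Classical.propDecidable

/-- The Euclidean plane. -/
abbrev Plane : Type := EuclideanSpace ℝ (Fin 2)

/-- A point trajectory: a moving point in the plane, parametrized by time. -/
abbrev Traj : Type := ℝ → Plane

/-- Signed orientation of `x` with respect to the line through `a` and `b`,
oriented from `a` to `b`; positive iff `x` lies in the open left halfplane `L⁻`. -/
def orient (a b x : Plane) : ℝ :=
  (b 0 - a 0) * (x 1 - a 1) - (b 1 - a 1) * (x 0 - a 0)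

/-- `x` lies in the open left halfplane `L⁻` of the line oriented from `a` to `b`. -/
def leftOf (a b x : Plane) : Prop := 0 < orient a b x

/-- `x` lies in the open right halfplane `L⁺` of the line oriented from `a` to `b`. -/
def rightOf (a b x : Plane) : Prop := orient a b x < 0

/-- `x` and `y` lie strictly on opposite sides of the line through `a` and `b`. -/
def OppositeSides (a b x y : Plane) : Prop := orient a b x * orient a b y < 0

/-- Four points of the plane are concyclic. -/
def Concyclic4 (a b c d : Plane) : Prop :=
  ∃ (o : Plane) (ρ : ℝ), 0 < ρ ∧
    dist a o = ρ ∧ dist b o = ρ ∧ dist c o = ρ ∧ dist d o = ρ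

/-- Five points of the plane are concyclic. -/
def Concyclic5 (a b c d e : Plane) : Prop :=
  ∃ (o : Plane) (ρ : ℝ), 0 < ρ ∧
    dist a o = ρ ∧ dist b o = ρ ∧ dist c o = ρ ∧ dist d o = ρ ∧ dist e o = ρ

/-- `x` lies in the open circumdisc of `a`, `b`, `c` (for non-collinear `a`, `b`, `c`
the circle through them is unique, so this is the usual notion). -/
def InCircumdisc (a b c x : Plane) : Prop :=
  ∃ (o : Plane) (ρ : ℝ), dist a o = ρ ∧ dist b o = ρ ∧ dist c o = ρ ∧ dist x o < ρ

/-- `x` lies strictly outside the circumdisc of `a`, `b`, `c`. -/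
def OutCircumdisc (a b c x : Plane) : Prop :=
  ∃ (o : Plane) (ρ : ℝ), dist a o = ρ ∧ dist b o = ρ ∧ dist c o = ρ ∧ ρ < dist x o

/-- The edge `pq` is Delaunay at time `t` with respect to the set `Q` of trajectories:
there is a closed disc whose boundary circle passes through `p t` and `q t` and whose
interior contains no point of `Q` at time `t`. -/
def DelaunayEdge (Q : Finset Traj) (p q : Traj) (t : ℝ) : Prop :=
  ∃ (o : Plane) (ρ : ℝ), dist (p t) o = ρ ∧ dist (q t) o = ρ ∧
    ∀ x ∈ Q, ¬ dist (x t) o < ρ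

/-- The four moving points `p, q, a, b` are concyclic at time `t`
(a co-circularity event). -/
def CocircAt (p q a b : Traj) (t : ℝ) : Prop :=
  Concyclic4 (p t) (q t) (a t) (b t)

/-- The three moving points `p, q, r` are collinear at time `t`
(a collinearity event). -/
def CollinAt (p q r : Traj) (t : ℝ) : Prop :=
  Collinear ℝ ({p t, q t, r t} : Set Plane)

/-- Pairwise distinctness of four trajectories. -/
def Distinct4 (p q a b : Traj) : Prop :=
  p ≠ q ∧ p ≠ a ∧ p ≠ b ∧ q ≠ a ∧ q ≠ b ∧ a ≠ b

/-- Pairwise distinctness of three trajectories. -/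
def Distinct3 (p q r : Traj) : Prop := p ≠ q ∧ p ≠ r ∧ q ≠ r

/-- The Delaunayhood of the edge `xy` is violated by the pair `u`, `v` at time `t`:
`u t` and `v t` lie strictly on opposite sides of the line through `x t` and `y t`,
and `v t` lies in the open circumdisc of `x t`, `y t`, `u t`. -/
def ViolatedBy (x y u v : Traj) (t : ℝ) : Prop :=
  OppositeSides (x t) (y t) (u t) (v t) ∧ InCircumdisc (x t) (y t) (u t) (v t)

/-- General position assumptions on a finite set of moving points: the motions are
continuous, no two points ever coincide, no five points are ever concyclic, no four
are ever collinear, no two co-circularity or collinearity events occur simultaneously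
and, at each such event, the involved point crosses the relevant circle or line
transversally. -/
structure GenPos (P : Finset Traj) : Prop where
  cont : ∀ p ∈ P, Continuous p
  never_coincide : ∀ p ∈ P, ∀ q ∈ P, p ≠ q → ∀ t : ℝ, p t ≠ q t
  no_five_cocirc : ∀ t : ℝ, ∀ p ∈ P, ∀ q ∈ P, ∀ a ∈ P, ∀ b ∈ P, ∀ e ∈ P,
    Distinct4 p q a b → p ≠ e → q ≠ e → a ≠ e → b ≠ e →
    ¬ Concyclic5 (p t) (q t) (a t) (b t) (e t)
  no_four_collin : ∀ t : ℝ, ∀ p ∈ P, ∀ q ∈ P, ∀ a ∈ P, ∀ b ∈ P,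
    Distinct4 p q a b → ¬ Collinear ℝ ({p t, q t, a t, b t} : Set Plane)
  unique_cocirc : ∀ t : ℝ, ∀ p ∈ P, ∀ q ∈ P, ∀ a ∈ P, ∀ b ∈ P,
    ∀ p' ∈ P, ∀ q' ∈ P, ∀ a' ∈ P, ∀ b' ∈ P,
    Distinct4 p q a b → Distinct4 p' q' a' b' →
    CocircAt p q a b t → CocircAt p' q' a' b' t →
    ({p, q, a, b} : Set Traj) = ({p', q', a', b'} : Set Traj)
  unique_collin : ∀ t : ℝ, ∀ p ∈ P, ∀ q ∈ P, ∀ r ∈ P, ∀ p' ∈ P, ∀ q' ∈ P, ∀ r' ∈ P,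
    Distinct3 p q r → Distinct3 p' q' r' →
    CollinAt p q r t → CollinAt p' q' r' t →
    ({p, q, r} : Set Traj) = ({p', q', r'} : Set Traj)
  cocirc_collin_separate : ∀ t : ℝ, ∀ p ∈ P, ∀ q ∈ P, ∀ a ∈ P, ∀ b ∈ P,
    ∀ p' ∈ P, ∀ q' ∈ P, ∀ r' ∈ P,
    Distinct4 p q a b → Distinct3 p' q' r' →
    CocircAt p q a b t → ¬ CollinAt p' q' r' t
  circle_transversal : ∀ p ∈ P, ∀ q ∈ P, ∀ a ∈ P, ∀ b ∈ P, Distinct4 p q a b →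
    ∀ t : ℝ, CocircAt p q a b t →
    ∃ δ > (0 : ℝ),
      ((∀ u ∈ Set.Ioo (t - δ) t, InCircumdisc (p u) (q u) (a u) (b u)) ∧
        (∀ u ∈ Set.Ioo t (t + δ), OutCircumdisc (p u) (q u) (a u) (b u))) ∨
      ((∀ u ∈ Set.Ioo (t - δ) t, OutCircumdisc (p u) (q u) (a u) (b u)) ∧
        (∀ u ∈ Set.Ioo t (t + δ), InCircumdisc (p u) (q u) (a u) (b u)))
  line_transversal : ∀ p ∈ P, ∀ q ∈ P, ∀ r ∈ P, Distinct3 p q r →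
    ∀ t : ℝ, CollinAt p q r t →
    ∃ δ > (0 : ℝ),
      ((∀ u ∈ Set.Ioo (t - δ) t, leftOf (p u) (q u) (r u)) ∧
        (∀ u ∈ Set.Ioo t (t + δ), rightOf (p u) (q u) (r u))) ∨
      ((∀ u ∈ Set.Ioo (t - δ) t, rightOf (p u) (q u) (r u)) ∧
        (∀ u ∈ Set.Ioo t (t + δ), leftOf (p u) (q u) (r u)))

/-- Pseudo-algebraicity: any four points of `P` are concyclic at most `s` times. -/
def CocircBound (P : Finset Traj) (s : ℕ) : Prop :=
  ∀ p ∈ P, ∀ q ∈ P, ∀ a ∈ P, ∀ b ∈ P, Distinct4 p q a b →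
    {t : ℝ | CocircAt p q a b t}.encard ≤ (s : ℕ∞)

/-- Pseudo-algebraicity: any three points of `P` are collinear at most `c` times. -/
def CollinBound (P : Finset Traj) (c : ℕ) : Prop :=
  ∀ p ∈ P, ∀ q ∈ P, ∀ r ∈ P, Distinct3 p q r →
    {t : ℝ | CollinAt p q r t}.encard ≤ (c : ℕ∞)

/-- A Delaunay co-circularity event of `P` occurs at time `t`: some four (distinct)
points of `P` are concyclic at time `t`, and the open disc bounded by their common
circle contains no point of `P` at time `t`. -/
def DelaunayCocircAt (P : Finset Traj) (t : ℝ) : Prop :=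
  ∃ p ∈ P, ∃ q ∈ P, ∃ a ∈ P, ∃ b ∈ P, Distinct4 p q a b ∧
    ∃ (o : Plane) (ρ : ℝ), 0 < ρ ∧
      dist (p t) o = ρ ∧ dist (q t) o = ρ ∧ dist (a t) o = ρ ∧ dist (b t) o = ρ ∧
      ∀ x ∈ P, ¬ dist (x t) o < ρ

/-- A `k`-shallow co-circularity of `p, q, a, b` at time `t`: the four points are
concyclic and the open disc bounded by their common circle contains at most `k`
points of `P` at time `t`. -/
def ShallowCocircAt (P : Finset Traj) (k : ℕ) (p q a b : Traj) (t : ℝ) : Prop :=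
  ∃ (o : Plane) (ρ : ℝ), 0 < ρ ∧
    dist (p t) o = ρ ∧ dist (q t) o = ρ ∧ dist (a t) o = ρ ∧ dist (b t) o = ρ ∧
    {x : Traj | x ∈ P ∧ dist (x t) o < ρ}.ncard ≤ k

/-- A `k`-shallow collinearity of `p, q, r` at time `t`: the three points are
collinear and one of the two open halfplanes bounded by the line through them
contains at most `k` points of `P` at time `t`. -/
def ShallowCollinAt (P : Finset Traj) (k : ℕ) (p q r : Traj) (t : ℝ) : Prop :=
  CollinAt p q r t ∧ p t ≠ q t ∧
    ({x : Traj | x ∈ P ∧ leftOf (p t) (q t) (x t)}.ncard ≤ k ∨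
      {x : Traj | x ∈ P ∧ rightOf (p t) (q t) (x t)}.ncard ≤ k)

/-- At time `t`, the point `r` lies on the segment `pq` and crosses it transversally
from the open halfplane `L⁻` (left of the oriented line `pq`) to `L⁺`. -/
def CrossesMinusPlus (p q r : Traj) (t : ℝ) : Prop :=
  r t ∈ segment ℝ (p t) (q t) ∧
    ∃ δ > (0 : ℝ),
      (∀ u ∈ Set.Ioo (t - δ) t, leftOf (p u) (q u) (r u)) ∧
      (∀ u ∈ Set.Ioo t (t + δ), rightOf (p u) (q u) (r u))

/-- At time `t`, the point `r` lies on the segment `pq` and crosses it transversally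
from `L⁺` to `L⁻`. -/
def CrossesPlusMinus (p q r : Traj) (t : ℝ) : Prop :=
  r t ∈ segment ℝ (p t) (q t) ∧
    ∃ δ > (0 : ℝ),
      (∀ u ∈ Set.Ioo (t - δ) t, rightOf (p u) (q u) (r u)) ∧
      (∀ u ∈ Set.Ioo t (t + δ), leftOf (p u) (q u) (r u))

/-- A Delaunay crossing `(pq, r, [t₀, t₁])`: the edge `pq` is Delaunay with respect
to `P` at times `t₀` and `t₁` but at no time in `(t₀, t₁)`; `r` lies on the closed
segment `pq` at least once during `[t₀, t₁]`; and `pq` is Delaunay with respect to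
`P ∖ {r}` throughout `[t₀, t₁]`. -/
structure DelaunayCrossing (P : Finset Traj) (p q r : Traj) (t₀ t₁ : ℝ) : Prop where
  lt : t₀ < t₁
  mem_p : p ∈ P
  mem_q : q ∈ P
  mem_r : r ∈ P
  distinct : Distinct3 p q r
  del_start : DelaunayEdge P p q t₀
  del_end : DelaunayEdge P p q t₁
  not_del : ∀ t ∈ Set.Ioo t₀ t₁, ¬ DelaunayEdge P p q t
  hits : ∃ t ∈ Set.Icc t₀ t₁, r t ∈ segment ℝ (p t) (q t)
  del_erase : ∀ t ∈ Set.Icc t₀ t₁, DelaunayEdge (P.erase r) p q t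

/-- A single Delaunay crossing, with the convention that `r` crosses the segment
`pq` from `L⁻` to `L⁺`: a Delaunay crossing in which `r` lies on the segment `pq`
at exactly one time of `[t₀, t₁]`, where it crosses from `L⁻` to `L⁺`.
(It is a clockwise `(p, r)`-crossing and a counterclockwise `(q, r)`-crossing.) -/
structure SingleCrossing (P : Finset Traj) (p q r : Traj) (t₀ t₁ : ℝ) : Prop where
  crossing : DelaunayCrossing P p q r t₀ t₁
  unique_hit : ∀ t ∈ Set.Icc t₀ t₁, ∀ t' ∈ Set.Icc t₀ t₁,
    r t ∈ segment ℝ (p t) (q t) → r t' ∈ segment ℝ (p t') (q t') → t = t'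
  dir : ∀ t ∈ Set.Icc t₀ t₁, r t ∈ segment ℝ (p t) (q t) → CrossesMinusPlus p q r t

/-- A double Delaunay crossing: a Delaunay crossing in which `r` lies on the
segment `pq` at exactly two times of `[t₀, t₁]`. -/
structure DoubleCrossing (P : Finset Traj) (p q r : Traj) (t₀ t₁ : ℝ) : Prop where
  crossing : DelaunayCrossing P p q r t₀ t₁
  two_hits : ∃ u v : ℝ, u ∈ Set.Icc t₀ t₁ ∧ v ∈ Set.Icc t₀ t₁ ∧ u ≠ v ∧
    r u ∈ segment ℝ (p u) (q u) ∧ r v ∈ segment ℝ (p v) (q v) ∧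
    ∀ t ∈ Set.Icc t₀ t₁, r t ∈ segment ℝ (p t) (q t) → t = u ∨ t = v

/-- The point `s` enters the cap `B[p,q,r] ∩ L⁺_pq` at time `t`: just before `t` it
lies strictly outside the circumdisc `B[p,q,r]`, and just after `t` it lies inside
`B[p,q,r]` and in the open right halfplane `L⁺` of the oriented line `pq`. -/
def EntersCapPlus (p q r s : Traj) (t : ℝ) : Prop :=
  ∃ δ > (0 : ℝ),
    (∀ u ∈ Set.Ioo (t - δ) t, OutCircumdisc (p u) (q u) (r u) (s u)) ∧
    (∀ u ∈ Set.Ioo t (t + δ),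
      InCircumdisc (p u) (q u) (r u) (s u) ∧ rightOf (p u) (q u) (s u))

/-- The point `s` leaves the cap `B[p,q,r] ∩ L⁻_pq` at time `t`: just before `t` it
lies inside the circumdisc `B[p,q,r]` and in the open left halfplane `L⁻` of the
oriented line `pq`, and just after `t` it lies strictly outside `B[p,q,r]`. -/
def LeavesCapMinus (p q r s : Traj) (t : ℝ) : Prop :=
  ∃ δ > (0 : ℝ),
    (∀ u ∈ Set.Ioo (t - δ) t,
      InCircumdisc (p u) (q u) (r u) (s u) ∧ leftOf (p u) (q u) (s u)) ∧
    (∀ u ∈ Set.Ioo t (t + δ), OutCircumdisc (p u) (q u) (r u) (s u))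

/-!
Write `σₓ = orient p q x` and `Hₓ = diamPower p q x`, the power of `x` with respect to the
circle with diameter `pq`. The power of `x` with respect to any circle through `p` and `q` is
`Hₓ - μ σₓ` for some `μ` depending only on the circle, so when `σᵣ ≠ 0`, `σₛ Hᵣ - σᵣ Hₛ`
(`incircle`) vanishes iff `p, q, r, s` are concyclic and `s ∈ B[p,q,r]` iff `(σₛ Hᵣ - σᵣ Hₛ) σᵣ > 0`.

At the crossing time `σᵣ = 0` and `Hᵣ < 0`, while at `t₀` and `t₁` the empty Delaunay circle
forbids the sign pattern that `σₛ Hᵣ - σᵣ Hₛ` has near the crossing time. If `s ∈ L⁺` at the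
crossing, take the last time `a` before it where this pattern (`s` inside `B[p,q,r]`, `r ∈ L⁻`,
`s ∈ L⁺`) fails. General position rules out `σᵣ(a) = 0` (a second visit of `r` to the segment,
or two simultaneous collinearities) and `σₛ(a) = 0` (the disc avoiding `s` gives `Hₛ > 0`), so
`s` is on the circle at `a` and enters the cap by transversality. If `s ∈ L⁻`, reverse time.
-/

open Set Filter Topology

lemma eq_of_coord_eq {x y : Plane} (h0 : x 0 = y 0) (h1 : x 1 = y 1) : x = y := by
  ext i
  fin_cases i
  exacts [h0, h1]

lemma dist_sq_eq_coord (x y : Plane) : dist x y ^ 2 = (x 0 - y 0) ^ 2 + (x 1 - y 1) ^ 2 := by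
  rw [EuclideanSpace.dist_eq, Real.sq_sqrt (by positivity), Fin.sum_univ_two, Real.dist_eq,
    Real.dist_eq, sq_abs, sq_abs]

lemma lineMap_apply_coord (a b : Plane) (θ : ℝ) (i : Fin 2) :
    AffineMap.lineMap a b θ i = a i + θ * (b i - a i) := by
  rw [AffineMap.lineMap_apply_module, PiLp.add_apply, PiLp.smul_apply, PiLp.smul_apply,
    smul_eq_mul, smul_eq_mul]
  ring

def diamPower (a b x : Plane) : ℝ := (x 0 - a 0) * (x 0 - b 0) + (x 1 - a 1) * (x 1 - b 1)

/-- The centres of the circles through `a` and `b`, normalised so that the power of `x` with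
respect to the circle centred at `pencilCenter a b μ` is `diamPower a b x - μ * orient a b x`. -/
def pencilCenter (a b : Plane) (μ : ℝ) : Plane :=
  !₂[(a 0 + b 0 - μ * (b 1 - a 1)) / 2, (a 1 + b 1 + μ * (b 0 - a 0)) / 2]

lemma dist_sq_pencilCenter_sub (a b x : Plane) (μ : ℝ) :
    dist x (pencilCenter a b μ) ^ 2 - dist a (pencilCenter a b μ) ^ 2 =
      diamPower a b x - μ * orient a b x := by
  simp only [dist_sq_eq_coord, pencilCenter, diamPower, orient, Matrix.cons_val_zero,
    Matrix.cons_val_one]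
  ring

lemma dist_pencilCenter_left_eq_right (a b : Plane) (μ : ℝ) :
    dist a (pencilCenter a b μ) = dist b (pencilCenter a b μ) := by
  have h := dist_sq_pencilCenter_sub a b b μ
  simp only [diamPower, orient, sub_self, mul_zero, add_zero] at h
  exact (pow_left_inj₀ dist_nonneg dist_nonneg two_ne_zero).1 (by linarith)

lemma exists_pencilCenter_eq {a b o : Plane} (hab : a ≠ b) (h : dist a o = dist b o) :
    ∃ μ, pencilCenter a b μ = o := by
  have hD : 0 < dist a b ^ 2 := pow_pos (dist_pos.2 hab) 2
  rw [dist_sq_eq_coord] at hD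
  have h2 := congrArg (· ^ 2) h
  simp only [dist_sq_eq_coord] at h2
  refine ⟨2 * ((o 1 - (a 1 + b 1) / 2) * (b 0 - a 0) - (o 0 - (a 0 + b 0) / 2) * (b 1 - a 1)) /
    ((a 0 - b 0) ^ 2 + (a 1 - b 1) ^ 2), ?_⟩
  apply eq_of_coord_eq <;>
    simp only [pencilCenter, PiLp.toLp_apply, Matrix.cons_val_zero, Matrix.cons_val_one] <;>
    field_simp
  · linear_combination (a 0 - b 0) * h2
  · linear_combination (a 1 - b 1) * h2

lemma ne_of_orient_ne_zero {a b x : Plane} (h : orient a b x ≠ 0) : a ≠ b := by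
  rintro rfl
  simp [orient] at h

lemma orient_lineMap (a b : Plane) (θ : ℝ) : orient a b (AffineMap.lineMap a b θ) = 0 := by
  simp only [orient, lineMap_apply_coord]
  ring

lemma diamPower_lineMap (a b : Plane) (θ : ℝ) :
    diamPower a b (AffineMap.lineMap a b θ) = θ * (θ - 1) * dist a b ^ 2 := by
  simp only [diamPower, lineMap_apply_coord, dist_sq_eq_coord]
  ring

lemma exists_lineMap_eq_of_orient_eq_zero {a b x : Plane} (hab : a ≠ b)
    (h : orient a b x = 0) : ∃ θ : ℝ, AffineMap.lineMap a b θ = x := by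
  have hD : 0 < dist a b ^ 2 := pow_pos (dist_pos.2 hab) 2
  rw [dist_sq_eq_coord] at hD
  unfold orient at h
  refine ⟨((x 0 - a 0) * (b 0 - a 0) + (x 1 - a 1) * (b 1 - a 1)) /
    ((a 0 - b 0) ^ 2 + (a 1 - b 1) ^ 2), ?_⟩
  apply eq_of_coord_eq <;> simp only [lineMap_apply_coord] <;> field_simp
  · linear_combination (b 1 - a 1) * h
  · linear_combination -(b 0 - a 0) * h

lemma collinear_of_orient_eq_zero {a b x : Plane} (hab : a ≠ b) (h : orient a b x = 0) :
    Collinear ℝ ({a, b, x} : Set Plane) := by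
  obtain ⟨θ, rfl⟩ := exists_lineMap_eq_of_orient_eq_zero hab h
  rw [Set.pair_comm, Set.insert_comm]
  exact collinear_insert_of_mem_affineSpan_pair (AffineMap.lineMap_mem_affineSpan_pair θ a b)

lemma orient_eq_zero_of_mem_segment {a b x : Plane} (h : x ∈ segment ℝ a b) :
    orient a b x = 0 := by
  rw [segment_eq_image_lineMap] at h
  obtain ⟨θ, -, rfl⟩ := h
  exact orient_lineMap a b θ

lemma mem_segment_of_orient_eq_zero_of_diamPower_nonpos {a b x : Plane} (hab : a ≠ b)
    (h : orient a b x = 0) (hx : diamPower a b x ≤ 0) : x ∈ segment ℝ a b := by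
  obtain ⟨θ, rfl⟩ := exists_lineMap_eq_of_orient_eq_zero hab h
  rw [diamPower_lineMap] at hx
  have hθ : θ * (θ - 1) ≤ 0 := nonpos_of_mul_nonpos_left hx (pow_pos (dist_pos.2 hab) 2)
  rw [segment_eq_image_lineMap]
  exact ⟨θ, ⟨by nlinarith, by nlinarith⟩, rfl⟩

lemma diamPower_ne_zero_of_orient_eq_zero {a b x : Plane} (hab : a ≠ b) (hxa : x ≠ a)
    (hxb : x ≠ b) (h : orient a b x = 0) : diamPower a b x ≠ 0 := by
  obtain ⟨θ, rfl⟩ := exists_lineMap_eq_of_orient_eq_zero hab h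
  have hθ₀ : θ ≠ 0 := by
    rintro rfl
    simp at hxa
  have hθ₁ : θ - 1 ≠ 0 := by
    intro h1
    obtain rfl : θ = 1 := by linarith
    simp at hxb
  rw [diamPower_lineMap]
  exact mul_ne_zero (mul_ne_zero hθ₀ hθ₁) (pow_ne_zero 2 (dist_ne_zero.2 hab))

lemma diamPower_neg_of_mem_segment {a b x : Plane} (hab : a ≠ b) (hxa : x ≠ a) (hxb : x ≠ b)
    (h : x ∈ segment ℝ a b) : diamPower a b x < 0 := by
  refine lt_of_le_of_ne ?_
    (diamPower_ne_zero_of_orient_eq_zero hab hxa hxb (orient_eq_zero_of_mem_segment h))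
  rw [segment_eq_image_lineMap] at h
  obtain ⟨θ, ⟨h0, h1⟩, rfl⟩ := h
  rw [diamPower_lineMap]
  exact mul_nonpos_of_nonpos_of_nonneg (mul_nonpos_of_nonneg_of_nonpos h0 (by linarith))
    (sq_nonneg _)

def incircle (a b r s : Plane) : ℝ :=
  orient a b s * diamPower a b r - orient a b r * diamPower a b s

lemma exists_circumcenter {a b r : Plane} (hr : orient a b r ≠ 0) :
    ∃ o : Plane, 0 < dist a o ∧ dist b o = dist a o ∧ dist r o = dist a o ∧
      ∀ x, orient a b r * (dist x o ^ 2 - dist a o ^ 2) = -incircle a b r x := by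
  set o := pencilCenter a b (diamPower a b r / orient a b r)
  have hbo : dist a o = dist b o := dist_pencilCenter_left_eq_right a b _
  have hpow : ∀ x, orient a b r * (dist x o ^ 2 - dist a o ^ 2) = -incircle a b r x := by
    intro x
    rw [dist_sq_pencilCenter_sub, incircle]
    field_simp
    ring
  refine ⟨o, dist_pos.2 fun hao => ne_of_orient_ne_zero hr ?_, hbo.symm, ?_, hpow⟩
  · rw [← hao, dist_self, eq_comm, dist_eq_zero] at hbo
    exact hbo.symm
  · have h := hpow r
    rw [incircle, sub_self, neg_zero, mul_eq_zero, or_iff_right hr, sub_eq_zero] at h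
    exact (pow_left_inj₀ dist_nonneg dist_nonneg two_ne_zero).1 h

lemma concyclic4_of_incircle_eq_zero {a b r x : Plane} (hr : orient a b r ≠ 0)
    (h : incircle a b r x = 0) : Concyclic4 a b r x := by
  obtain ⟨o, hρ, hb, hr', hpow⟩ := exists_circumcenter hr
  have hx := hpow x
  rw [h, neg_zero, mul_eq_zero, or_iff_right hr, sub_eq_zero] at hx
  exact ⟨o, dist a o, hρ, rfl, hb, hr', (pow_left_inj₀ dist_nonneg dist_nonneg two_ne_zero).1 hx⟩

lemma inCircumdisc_of_incircle_mul_orient_pos {a b r x : Plane}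
    (h : 0 < incircle a b r x * orient a b r) : InCircumdisc a b r x := by
  have hr : orient a b r ≠ 0 := by
    intro h0
    simp [h0] at h
  obtain ⟨o, -, hb, hr', hpow⟩ := exists_circumcenter hr
  have hx : orient a b r ^ 2 * (dist x o ^ 2 - dist a o ^ 2) < 0 := by
    linear_combination (exp := 1) orient a b r * hpow x + h
  have hx : dist x o ^ 2 < dist a o ^ 2 := sub_neg.1 (neg_of_mul_neg_right hx (sq_nonneg _))
  exact ⟨o, dist a o, rfl, hb, hr', lt_of_pow_lt_pow_left₀ 2 dist_nonneg hx⟩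

lemma OutCircumdisc.not_inCircumdisc {a b r x : Plane} (hr : orient a b r ≠ 0)
    (hout : OutCircumdisc a b r x) : ¬ InCircumdisc a b r x := by
  rintro ⟨o, ρ, ha, hb, hr', hx⟩
  obtain ⟨o', ρ', ha', hb', hr'', hx'⟩ := hout
  have hab := ne_of_orient_ne_zero hr
  obtain ⟨μ, rfl⟩ := exists_pencilCenter_eq hab (ha.trans hb.symm)
  obtain ⟨μ', rfl⟩ := exists_pencilCenter_eq hab (ha'.trans hb'.symm)
  obtain rfl : μ = μ' := by
    have h := dist_sq_pencilCenter_sub a b r μ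
    have h' := dist_sq_pencilCenter_sub a b r μ'
    rw [hr', ha, sub_self] at h
    rw [hr'', ha', sub_self] at h'
    exact mul_right_cancel₀ hr (by linarith)
  linarith

lemma DelaunayEdge.exists_pencil_nonneg {Q : Finset Traj} {p q : Traj} {t : ℝ}
    (h : DelaunayEdge Q p q t) (hpq : p t ≠ q t) :
    ∃ μ, ∀ x ∈ Q, 0 ≤ diamPower (p t) (q t) (x t) - μ * orient (p t) (q t) (x t) := by
  obtain ⟨o, ρ, hp, hq, hempty⟩ := h
  obtain ⟨μ, rfl⟩ := exists_pencilCenter_eq hpq (hp.trans hq.symm)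
  refine ⟨μ, fun x hx => ?_⟩
  rw [← dist_sq_pencilCenter_sub, hp, sub_nonneg]
  exact pow_le_pow_left₀ (hp ▸ dist_nonneg) (not_lt.1 (hempty x hx)) 2

lemma IsOpen.exists_last_notMem {U : Set ℝ} (hU : IsOpen U) {a b : ℝ} (hab : a < b)
    (ha : a ∉ U) (hb : ∀ᶠ t in 𝓝[<] b, t ∈ U) : ∃ c ∈ Ico a b, c ∉ U ∧ Ioo c b ⊆ U := by
  obtain ⟨b', hb'b, hb'⟩ := mem_nhdsLT_iff_exists_Ioo_subset.1 hb
  set S := Uᶜ ∩ Icc a (max a b')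
  have hS : BddAbove S := bddAbove_Icc.mono inter_subset_right
  have haS : a ∈ S := ⟨ha, left_mem_Icc.2 (le_max_left a b')⟩
  have hcS : sSup S ∈ S := (hU.isClosed_compl.inter isClosed_Icc).csSup_mem ⟨a, haS⟩ hS
  refine ⟨sSup S, ⟨le_csSup hS haS, hcS.2.2.trans_lt (max_lt hab hb'b)⟩, hcS.1, ?_⟩
  rintro t ⟨hct, htb⟩
  by_contra htU
  rcases le_or_gt t (max a b') with ht | ht
  · exact (le_csSup hS ⟨htU, hcS.2.1.trans hct.le, ht⟩).not_gt hct
  · exact htU (hb' ⟨(le_max_right a b').trans_lt ht, htb⟩)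

lemma mul_sub_mul_eq_zero_of_boundary {σr σs Hr Hs : ℝ} (hG : 0 ≤ σs * Hr - σr * Hs)
    (hσr : 0 ≤ σr) (hσs : σs ≤ 0) (hr_line : σr = 0 → 0 < Hr) (hs_line : σs = 0 → 0 < Hs)
    (hnot_both : σr = 0 → σs ≠ 0) (hnot : ¬(0 < σs * Hr - σr * Hs ∧ 0 < σr ∧ σs < 0)) :
    σs * Hr - σr * Hs = 0 ∧ 0 < σr ∧ σs < 0 := by
  have hσr' : 0 < σr := by
    refine lt_of_le_of_ne hσr fun h0 => hnot_both h0.symm ?_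
    have hH := hr_line h0.symm
    rw [← h0, zero_mul, sub_zero] at hG
    exact (mul_eq_zero.1 (le_antisymm (mul_nonpos_of_nonpos_of_nonneg hσs hH.le) hG)).resolve_right
      hH.ne'
  have hσs' : σs < 0 := by
    refine lt_of_le_of_ne hσs fun h0 => ?_
    rw [h0, zero_mul, zero_sub] at hG
    linarith [mul_pos hσr' (hs_line h0)]
  exact ⟨le_antisymm (not_lt.1 fun h => hnot ⟨h, hσr', hσs'⟩) hG, hσr', hσs'⟩

/- In the application `σₓ t = orient (p t) (q t) (x t)` and `Hₓ t = diamPower (p t) (q t) (x t)`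
for `x = r, s`; `hstart` is what a Delaunay circle through `p` and `q` at time `t₀` provides. -/
theorem exists_incircle_eq_zero_before {σr σs Hr Hs : ℝ → ℝ} {t₀ tc δ : ℝ}
    (hσr : Continuous σr) (hσs : Continuous σs) (hHr : Continuous Hr) (hHs : Continuous Hs)
    (hstart : ∃ μ, 0 ≤ Hr t₀ - μ * σr t₀ ∧ 0 ≤ Hs t₀ - μ * σs t₀)
    (hr_line : ∀ t ∈ Ico t₀ tc, σr t = 0 → 0 < Hr t)
    (hs_line : ∀ t ∈ Ico t₀ tc, σs t = 0 → 0 < Hs t)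
    (hnot_both : ∀ t ∈ Ico t₀ tc, σr t = 0 → σs t ≠ 0)
    (ht₀ : t₀ ≤ tc) (hσr_tc : σr tc = 0) (hHr_tc : Hr tc < 0) (hσs_tc : σs tc < 0)
    (hδ : 0 < δ) (hleft : ∀ u ∈ Ioo (tc - δ) tc, 0 < σr u) :
    ∃ a ∈ Ico t₀ tc, σs a * Hr a - σr a * Hs a = 0 ∧ 0 < σr a ∧ σs a < 0 ∧
      ∀ u ∈ Ioo a tc, 0 < σs u * Hr u - σr u * Hs u ∧ 0 < σr u ∧ σs u < 0 := by
  set G := fun t => σs t * Hr t - σr t * Hs t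
  have hG : Continuous G := by fun_prop
  set U := {t | 0 < G t ∧ 0 < σr t ∧ σs t < 0}
  have hU : IsOpen U :=
    (isOpen_lt continuous_const hG).inter
      ((isOpen_lt continuous_const hσr).inter (isOpen_lt hσs continuous_const))
  have hG₀ : σs t₀ ≤ 0 → 0 ≤ σr t₀ → G t₀ ≤ 0 := by
    obtain ⟨μ, hr, hs⟩ := hstart
    intro h1 h2
    have hG₀ : G t₀ = σs t₀ * (Hr t₀ - μ * σr t₀) - σr t₀ * (Hs t₀ - μ * σs t₀) := by
      simp only [G]
      ring
    rw [hG₀]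
    linarith [mul_nonpos_of_nonpos_of_nonneg h1 hr, mul_nonneg h2 hs]
  have hG_tc : 0 < G tc := by
    simp only [G, hσr_tc, zero_mul, sub_zero]
    exact mul_pos_of_neg_of_neg hσs_tc hHr_tc
  have ht₀tc : t₀ < tc := lt_of_le_of_ne ht₀ fun h => by
    subst h
    exact (hG₀ hσs_tc.le hσr_tc.ge).not_gt hG_tc
  have hnear : ∀ᶠ t in 𝓝[<] tc, t ∈ U := by
    have h1 : ∀ᶠ t in 𝓝 tc, 0 < G t ∧ σs t < 0 :=
      (hG.tendsto tc |>.eventually (lt_mem_nhds hG_tc)).and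
        (hσs.tendsto tc |>.eventually (gt_mem_nhds hσs_tc))
    filter_upwards [nhdsWithin_le_nhds h1, Ioo_mem_nhdsLT (show tc - δ < tc by linarith)]
      with t ht ht'
    exact ⟨ht.1, hleft t ht', ht.2⟩
  obtain ⟨a, ha, haU, hU_after⟩ := hU.exists_last_notMem ht₀tc
    (fun h => (hG₀ h.2.2.le h.2.1.le).not_gt h.1) hnear
  have hclosure : a ∈ closure U := closure_mono hU_after <| by
    rw [closure_Ioo ha.2.ne]
    exact left_mem_Icc.2 ha.2.le
  have hclosed : IsClosed {t | 0 ≤ G t ∧ 0 ≤ σr t ∧ σs t ≤ 0} :=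
    (isClosed_le continuous_const hG).inter
      ((isClosed_le continuous_const hσr).inter (isClosed_le hσs continuous_const))
  obtain ⟨hGa, hσra, hσsa⟩ : 0 ≤ G a ∧ 0 ≤ σr a ∧ σs a ≤ 0 :=
    hclosed.closure_subset_iff.2 (fun t ht => ⟨ht.1.le, ht.2.1.le, ht.2.2.le⟩) hclosure
  obtain ⟨hGa0, hσra', hσsa'⟩ := mul_sub_mul_eq_zero_of_boundary hGa hσra hσsa
    (hr_line a ha) (hs_line a ha) (hnot_both a ha) haU
  exact ⟨a, ha, hGa0, hσra', hσsa', hU_after⟩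

theorem exists_incircle_eq_zero_after {σr σs Hr Hs : ℝ → ℝ} {tc t₁ δ : ℝ}
    (hσr : Continuous σr) (hσs : Continuous σs) (hHr : Continuous Hr) (hHs : Continuous Hs)
    (hend : ∃ μ, 0 ≤ Hr t₁ - μ * σr t₁ ∧ 0 ≤ Hs t₁ - μ * σs t₁)
    (hr_line : ∀ t ∈ Ioc tc t₁, σr t = 0 → 0 < Hr t)
    (hs_line : ∀ t ∈ Ioc tc t₁, σs t = 0 → 0 < Hs t)
    (hnot_both : ∀ t ∈ Ioc tc t₁, σr t = 0 → σs t ≠ 0)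
    (ht₁ : tc ≤ t₁) (hσr_tc : σr tc = 0) (hHr_tc : Hr tc < 0) (hσs_tc : 0 < σs tc)
    (hδ : 0 < δ) (hright : ∀ u ∈ Ioo tc (tc + δ), σr u < 0) :
    ∃ b ∈ Ioc tc t₁, σs b * Hr b - σr b * Hs b = 0 ∧ σr b < 0 ∧ 0 < σs b ∧
      ∀ u ∈ Ioo tc b, σs u * Hr u - σr u * Hs u < 0 ∧ σr u < 0 ∧ 0 < σs u := by
  have hIoc : ∀ {t}, t ∈ Ico (-t₁) (-tc) → -t ∈ Ioc tc t₁ := fun ht =>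
    ⟨by linarith [ht.2], by linarith [ht.1]⟩
  obtain ⟨a, ha, hGa, hσra, hσsa, hafter⟩ :=
    exists_incircle_eq_zero_before (σr := fun t => -σr (-t)) (σs := fun t => -σs (-t))
      (Hr := fun t => Hr (-t)) (Hs := fun t => Hs (-t)) (t₀ := -t₁) (tc := -tc) (δ := δ)
      (by fun_prop) (by fun_prop) (by fun_prop) (by fun_prop)
      (by obtain ⟨μ, h1, h2⟩ := hend; exact ⟨-μ, by simpa using h1, by simpa using h2⟩)
      (fun t ht h => hr_line _ (hIoc ht) (neg_eq_zero.1 h))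
      (fun t ht h => hs_line _ (hIoc ht) (neg_eq_zero.1 h))
      (fun t ht h h' => hnot_both _ (hIoc ht) (neg_eq_zero.1 h) (neg_eq_zero.1 h'))
      (neg_le_neg ht₁) (by simpa using hσr_tc) (by simpa using hHr_tc) (by simpa using hσs_tc)
      hδ (fun u hu => neg_pos.2 (hright _ ⟨by linarith [hu.2], by linarith [hu.1]⟩))
  refine ⟨-a, hIoc ha, by linarith, by linarith, by linarith, fun u hu => ?_⟩
  have h := hafter (-u) ⟨by linarith [hu.2], by linarith [hu.1]⟩
  simp only [neg_neg] at h
  exact ⟨by linarith [h.1], by linarith [h.2.1], by linarith [h.2.2]⟩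

lemma Continuous.orient {α : Type*} [TopologicalSpace α] {f g h : α → Plane}
    (hf : Continuous f) (hg : Continuous g) (hh : Continuous h) :
    Continuous fun t => orient (f t) (g t) (h t) := by
  unfold _root_.orient
  fun_prop

lemma Continuous.diamPower {α : Type*} [TopologicalSpace α] {f g h : α → Plane}
    (hf : Continuous f) (hg : Continuous g) (hh : Continuous h) :
    Continuous fun t => diamPower (f t) (g t) (h t) := by
  unfold _root_.diamPower
  fun_prop

section Crossing

variable {P : Finset Traj} {p q r s : Traj} {t₀ t₁ : ℝ}

lemma GenPos.orient_ne_zero_of_orient_eq_zero (hP : GenPos P) (hp : p ∈ P) (hq : q ∈ P)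
    (hr : r ∈ P) (hs : s ∈ P) (hd : Distinct4 p q r s) {t : ℝ}
    (hr0 : orient (p t) (q t) (r t) = 0) : orient (p t) (q t) (s t) ≠ 0 := by
  obtain ⟨hpq, hpr, hps, hqr, hqs, hrs⟩ := hd
  intro hs0
  have hpq' := hP.never_coincide p hp q hq hpq t
  have hsets := hP.unique_collin t p hp q hq r hr p hp q hq s hs ⟨hpq, hpr, hqr⟩ ⟨hpq, hps, hqs⟩
    (collinear_of_orient_eq_zero hpq' hr0) (collinear_of_orient_eq_zero hpq' hs0)
  have hr_mem : r ∈ ({p, q, s} : Set Traj) := hsets ▸ by simp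
  simp only [Set.mem_insert_iff, Set.mem_singleton_iff] at hr_mem
  rcases hr_mem with h | h | h
  exacts [hpr h.symm, hqr h.symm, hrs h]

lemma GenPos.entersCapPlus (hP : GenPos P) (hp : p ∈ P) (hq : q ∈ P) (hr : r ∈ P)
    (hs : s ∈ P) (hd : Distinct4 p q r s) {a c : ℝ} (hac : a < c) (hcoc : CocircAt p q r s a)
    (hcap : ∀ u ∈ Ioo a c, 0 < incircle (p u) (q u) (r u) (s u) ∧
      0 < orient (p u) (q u) (r u) ∧ orient (p u) (q u) (s u) < 0) :
    EntersCapPlus p q r s a := by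
  have hin : ∀ u ∈ Ioo a c, InCircumdisc (p u) (q u) (r u) (s u) := fun u hu =>
    inCircumdisc_of_incircle_mul_orient_pos (mul_pos (hcap u hu).1 (hcap u hu).2.1)
  obtain ⟨δ, hδ, ⟨-, hout⟩ | ⟨hout, -⟩⟩ := hP.circle_transversal p hp q hq r hr s hs hd a hcoc
  · obtain ⟨u, hau, hu⟩ := exists_between (lt_min (lt_add_of_pos_right a hδ) hac)
    have hu' : u ∈ Ioo a c := ⟨hau, hu.trans_le (min_le_right _ _)⟩
    exact ((hout u ⟨hau, hu.trans_le (min_le_left _ _)⟩).not_inCircumdisc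
      (hcap u hu').2.1.ne' (hin u hu')).elim
  · refine ⟨min δ (c - a), lt_min hδ (sub_pos.2 hac),
      fun u hu => hout u ⟨by linarith [min_le_left δ (c - a), hu.1], hu.2⟩, fun u hu => ?_⟩
    have hu' : u ∈ Ioo a c := ⟨hu.1, by linarith [min_le_right δ (c - a), hu.2]⟩
    exact ⟨hin u hu', (hcap u hu').2.2⟩

lemma GenPos.leavesCapMinus (hP : GenPos P) (hp : p ∈ P) (hq : q ∈ P) (hr : r ∈ P)
    (hs : s ∈ P) (hd : Distinct4 p q r s) {b c : ℝ} (hcb : c < b) (hcoc : CocircAt p q r s b)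
    (hcap : ∀ u ∈ Ioo c b, incircle (p u) (q u) (r u) (s u) < 0 ∧
      orient (p u) (q u) (r u) < 0 ∧ 0 < orient (p u) (q u) (s u)) :
    LeavesCapMinus p q r s b := by
  have hin : ∀ u ∈ Ioo c b, InCircumdisc (p u) (q u) (r u) (s u) := fun u hu =>
    inCircumdisc_of_incircle_mul_orient_pos (mul_pos_of_neg_of_neg (hcap u hu).1 (hcap u hu).2.1)
  obtain ⟨δ, hδ, ⟨-, hout⟩ | ⟨hout, -⟩⟩ := hP.circle_transversal p hp q hq r hr s hs hd b hcoc
  · refine ⟨min δ (b - c), lt_min hδ (sub_pos.2 hcb), fun u hu => ?_,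
      fun u hu => hout u ⟨hu.1, by linarith [min_le_left δ (b - c), hu.2]⟩⟩
    have hu' : u ∈ Ioo c b := ⟨by linarith [min_le_right δ (b - c), hu.1], hu.2⟩
    exact ⟨hin u hu', (hcap u hu').2.2⟩
  · obtain ⟨u, hu, hub⟩ := exists_between (max_lt (sub_lt_self b hδ) hcb)
    have hu' : u ∈ Ioo c b := ⟨(le_max_right _ _).trans_lt hu, hub⟩
    exact ((hout u ⟨(le_max_left _ _).trans_lt hu, hub⟩).not_inCircumdisc
      (hcap u hu').2.1.ne (hin u hu')).elim

namespace DelaunayCrossing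

lemma exists_pencil_nonneg (hP : GenPos P) (hc : DelaunayCrossing P p q r t₀ t₁) (hs : s ∈ P)
    {t : ℝ} (hdel : DelaunayEdge P p q t) :
    ∃ μ, 0 ≤ diamPower (p t) (q t) (r t) - μ * orient (p t) (q t) (r t) ∧
      0 ≤ diamPower (p t) (q t) (s t) - μ * orient (p t) (q t) (s t) := by
  obtain ⟨μ, hμ⟩ := hdel.exists_pencil_nonneg
    (hP.never_coincide p hc.mem_p q hc.mem_q hc.distinct.1 t)
  exact ⟨μ, hμ r hc.mem_r, hμ s hs⟩

lemma diamPower_pos_of_mem_erase (hP : GenPos P) (hc : DelaunayCrossing P p q r t₀ t₁)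
    (hs : s ∈ P.erase r) (hsp : s ≠ p) (hsq : s ≠ q) {t : ℝ} (ht : t ∈ Icc t₀ t₁)
    (h0 : orient (p t) (q t) (s t) = 0) : 0 < diamPower (p t) (q t) (s t) := by
  have hpq := hP.never_coincide p hc.mem_p q hc.mem_q hc.distinct.1 t
  obtain ⟨μ, hμ⟩ := (hc.del_erase t ht).exists_pencil_nonneg hpq
  have h := hμ s hs
  rw [h0, mul_zero, sub_zero] at h
  have hs := Finset.mem_of_mem_erase hs
  exact h.lt_of_ne (diamPower_ne_zero_of_orient_eq_zero hpq
    (hP.never_coincide s hs p hc.mem_p hsp t) (hP.never_coincide s hs q hc.mem_q hsq t) h0).symm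

lemma orient_eq_zero_and_diamPower_neg (hP : GenPos P) (hc : DelaunayCrossing P p q r t₀ t₁)
    {t : ℝ} (hseg : r t ∈ segment ℝ (p t) (q t)) :
    orient (p t) (q t) (r t) = 0 ∧ diamPower (p t) (q t) (r t) < 0 := by
  obtain ⟨_, hp, hq, hr, ⟨hpq, hpr, hqr⟩, -⟩ := hc
  exact ⟨orient_eq_zero_of_mem_segment hseg, diamPower_neg_of_mem_segment
    (hP.never_coincide p hp q hq hpq t) (hP.never_coincide r hr p hp hpr.symm t)
    (hP.never_coincide r hr q hq hqr.symm t) hseg⟩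

end DelaunayCrossing

namespace SingleCrossing

lemma diamPower_pos_of_ne_hit (hP : GenPos P) (hc : SingleCrossing P p q r t₀ t₁) {tc t : ℝ}
    (htc : tc ∈ Icc t₀ t₁) (hseg : r tc ∈ segment ℝ (p tc) (q tc)) (ht : t ∈ Icc t₀ t₁)
    (hne : t ≠ tc) (h0 : orient (p t) (q t) (r t) = 0) : 0 < diamPower (p t) (q t) (r t) := by
  have hpq := hP.never_coincide p hc.crossing.mem_p q hc.crossing.mem_q hc.crossing.distinct.1 t
  by_contra h
  exact hne (hc.unique_hit t ht tc htc
    (mem_segment_of_orient_eq_zero_of_diamPower_nonpos hpq h0 (not_lt.1 h)) hseg)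

theorem exists_entersCapPlus (hP : GenPos P) (hc : SingleCrossing P p q r t₀ t₁) (hs : s ∈ P)
    (hsp : s ≠ p) (hsq : s ≠ q) (hsr : s ≠ r) {tc : ℝ} (htc : tc ∈ Icc t₀ t₁)
    (hseg : r tc ∈ segment ℝ (p tc) (q tc)) (hside : orient (p tc) (q tc) (s tc) < 0) :
    ∃ t ∈ Icc t₀ t₁, CocircAt p q r s t ∧ OppositeSides (p t) (q t) (r t) (s t) ∧
      EntersCapPlus p q r s t := by
  obtain ⟨_, hp, hq, hr, ⟨hpq, hpr, hqr⟩, hdel₀, -⟩ := hc.crossing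
  have hd : Distinct4 p q r s := ⟨hpq, hpr, hsp.symm, hqr, hsq.symm, hsr.symm⟩
  have hIcc : ∀ {t}, t ∈ Ico t₀ tc → t ∈ Icc t₀ t₁ := fun ht => ⟨ht.1, ht.2.le.trans htc.2⟩
  obtain ⟨-, δ, hδ, hleft, -⟩ := hc.dir tc htc hseg
  obtain ⟨hσr_tc, hHr_tc⟩ := hc.crossing.orient_eq_zero_and_diamPower_neg hP hseg
  obtain ⟨a, ha, hGa, hσra, hσsa, hafter⟩ := exists_incircle_eq_zero_before
    ((hP.cont p hp).orient (hP.cont q hq) (hP.cont r hr))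
    ((hP.cont p hp).orient (hP.cont q hq) (hP.cont s hs))
    ((hP.cont p hp).diamPower (hP.cont q hq) (hP.cont r hr))
    ((hP.cont p hp).diamPower (hP.cont q hq) (hP.cont s hs))
    (hc.crossing.exists_pencil_nonneg hP hs hdel₀)
    (fun t ht => hc.diamPower_pos_of_ne_hit hP htc hseg (hIcc ht) ht.2.ne)
    (fun t ht => hc.crossing.diamPower_pos_of_mem_erase hP (Finset.mem_erase.2 ⟨hsr, hs⟩)
      hsp hsq (hIcc ht))
    (fun t _ => hP.orient_ne_zero_of_orient_eq_zero hp hq hr hs hd)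
    htc.1 hσr_tc hHr_tc hside hδ hleft
  have hcoc := concyclic4_of_incircle_eq_zero hσra.ne' hGa
  exact ⟨a, hIcc ha, hcoc, mul_neg_of_pos_of_neg hσra hσsa,
    hP.entersCapPlus hp hq hr hs hd ha.2 hcoc hafter⟩

theorem exists_leavesCapMinus (hP : GenPos P) (hc : SingleCrossing P p q r t₀ t₁) (hs : s ∈ P)
    (hsp : s ≠ p) (hsq : s ≠ q) (hsr : s ≠ r) {tc : ℝ} (htc : tc ∈ Icc t₀ t₁)
    (hseg : r tc ∈ segment ℝ (p tc) (q tc)) (hside : 0 < orient (p tc) (q tc) (s tc)) :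
    ∃ t ∈ Icc t₀ t₁, CocircAt p q r s t ∧ OppositeSides (p t) (q t) (r t) (s t) ∧
      LeavesCapMinus p q r s t := by
  obtain ⟨_, hp, hq, hr, ⟨hpq, hpr, hqr⟩, -, hdel₁, -⟩ := hc.crossing
  have hd : Distinct4 p q r s := ⟨hpq, hpr, hsp.symm, hqr, hsq.symm, hsr.symm⟩
  have hIcc : ∀ {t}, t ∈ Ioc tc t₁ → t ∈ Icc t₀ t₁ := fun ht => ⟨htc.1.trans ht.1.le, ht.2⟩
  obtain ⟨-, δ, hδ, -, hright⟩ := hc.dir tc htc hseg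
  obtain ⟨hσr_tc, hHr_tc⟩ := hc.crossing.orient_eq_zero_and_diamPower_neg hP hseg
  obtain ⟨b, hb, hGb, hσrb, hσsb, hbefore⟩ := exists_incircle_eq_zero_after
    ((hP.cont p hp).orient (hP.cont q hq) (hP.cont r hr))
    ((hP.cont p hp).orient (hP.cont q hq) (hP.cont s hs))
    ((hP.cont p hp).diamPower (hP.cont q hq) (hP.cont r hr))
    ((hP.cont p hp).diamPower (hP.cont q hq) (hP.cont s hs))
    (hc.crossing.exists_pencil_nonneg hP hs hdel₁)
    (fun t ht => hc.diamPower_pos_of_ne_hit hP htc hseg (hIcc ht) ht.1.ne')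
    (fun t ht => hc.crossing.diamPower_pos_of_mem_erase hP (Finset.mem_erase.2 ⟨hsr, hs⟩)
      hsp hsq (hIcc ht))
    (fun t _ => hP.orient_ne_zero_of_orient_eq_zero hp hq hr hs hd)
    htc.2 hσr_tc hHr_tc hside hδ hright
  have hcoc := concyclic4_of_incircle_eq_zero hσrb.ne hGb
  exact ⟨b, hIcc hb, hcoc, mul_neg_of_neg_of_pos hσrb hσsb,
    hP.leavesCapMinus hp hq hr hs hd hb.1 hcoc hbefore⟩

end SingleCrossing

end Crossing

theorem statement4_general (P : Finset Traj)
    (hP : GenPos P)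
    (p q r : Traj) (t₀ t₁ : ℝ)
    (hcross : SingleCrossing P p q r t₀ t₁) :
    ∀ s : Traj, s ∈ P → s ≠ p → s ≠ q → s ≠ r →
      ∃ t ∈ Set.Icc t₀ t₁,
        CocircAt p q r s t ∧
        OppositeSides (p t) (q t) (r t) (s t) ∧
        (EntersCapPlus p q r s t ∨ LeavesCapMinus p q r s t) := by
  intro s hs hsp hsq hsr
  obtain ⟨tc, htc, hseg⟩ := hcross.crossing.hits
  obtain ⟨_, hp, hq, hr, ⟨hpq, hpr, hqr⟩, -⟩ := hcross.crossing
  have hside : orient (p tc) (q tc) (s tc) ≠ 0 :=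
    hP.orient_ne_zero_of_orient_eq_zero hp hq hr hs
      ⟨hpq, hpr, hsp.symm, hqr, hsq.symm, hsr.symm⟩ (orient_eq_zero_of_mem_segment hseg)
  rcases hside.lt_or_gt with hneg | hpos
  · obtain ⟨t, ht, hcoc, hopp, henter⟩ :=
      hcross.exists_entersCapPlus hP hs hsp hsq hsr htc hseg hneg
    exact ⟨t, ht, hcoc, hopp, Or.inl henter⟩
  · obtain ⟨t, ht, hcoc, hopp, hleave⟩ :=
      hcross.exists_leavesCapMinus hP hs hsp hsq hsr htc hseg hpos
    exact ⟨t, ht, hcoc, hopp, Or.inr hleave⟩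

/-- (Lemma 4.4 of the paper.) If `(pq, r, [t₀,t₁])` is a single
Delaunay crossing in which `r` crosses the segment `pq` from `L⁻_pq` to `L⁺_pq`,
then every other point `s ∈ P` is concyclic with `p, q, r` at some time of
`[t₀,t₁]`, with `r` and `s` strictly on opposite sides of the line through `p` and
`q`; moreover, at that time `s` crosses the circumcircle of `p, q, r`, either
entering the cap `B[p,q,r] ∩ L⁺_pq` or leaving the cap `B[p,q,r] ∩ L⁻_pq`. -/
theorem statement4 (sc cc : ℕ) (P : Finset Traj)
    (hP : GenPos P) (hs : CocircBound P sc) (hc : CollinBound P cc)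
    (p q r : Traj) (t₀ t₁ : ℝ)
    (hcross : SingleCrossing P p q r t₀ t₁) :
    ∀ s : Traj, s ∈ P → s ≠ p → s ≠ q → s ≠ r →
      ∃ t ∈ Set.Icc t₀ t₁,
        CocircAt p q r s t ∧
        OppositeSides (p t) (q t) (r t) (s t) ∧
        (EntersCapPlus p q r s t ∨ LeavesCapMinus p q r s t) :=
  statement4_general P hP p q r t₀ t₁ hcross
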